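/- Let F_d be an invertible n₂×n₂ matrix and consider F_ε = [[F_a, F_b],[F_c/ε, F_d/ε]]. For all sufficiently small ε > 0, sI - F_ε is invertible whenever s is not an eigenvalue of F₀ = F_a - F_b F_d^{-1} F_c, and the Schur complement formula gives H (sI - F_ε)^{-1} G + K = H₀(sI - F₀ + O(ε))^{-1} G₀ + K₀ + O(ε); in particular the leading-order expansion Φ_ε(s) = Φ₀(s) + O(ε) holds for each fixed such s. -/

import Mathlib

/-! Multiplying the second block row of `s • 1 - F_ε` by `ε` turns it into the pencil `A + ε • B`
with `A = [[s - Fa, -Fb], [-Fc, -Fd]]` and `B = [[0, 0], [0, s]]`; the factor `ε⁻¹` in `G_ε` cancels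
against this row scaling, so `Φ_ε(s) = H (A + ε B)⁻¹ G + K` for every `ε ≠ 0`. The Schur complement
of `-Fd` in `A` is `s - F₀`, so `A` is invertible and the Schur complement formula turns
`H A⁻¹ G + K` into `Φ₀(s)`. Inversion is differentiable at invertible matrices, hence
`ε ↦ H (A + ε B)⁻¹ G` is `O(ε)`-close to its value at `0`, and `A + ε B` stays invertible for small
`ε` because the units form an open set. -/

open Matrix

namespace Matrix

variable {k l m n α : Type*} [Fintype m] [Fintype n] [DecidableEq m] [DecidableEq n] [CommRing α]

theorem inv_fromBlocks_of_isUnit₂₂ {A : Matrix m m α} {B : Matrix m n α} {C : Matrix n m α}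
    {D : Matrix n n α} (hD : IsUnit D) (hS : IsUnit (A - B * D⁻¹ * C)) :
    IsUnit (fromBlocks A B C D) ∧
      (fromBlocks A B C D)⁻¹ =
        fromBlocks (A - B * D⁻¹ * C)⁻¹ (-((A - B * D⁻¹ * C)⁻¹ * B * D⁻¹))
          (-(D⁻¹ * C * (A - B * D⁻¹ * C)⁻¹))
          (D⁻¹ + D⁻¹ * C * (A - B * D⁻¹ * C)⁻¹ * B * D⁻¹) := by
  let := hD.invertible
  rw [← invOf_eq_nonsing_inv D] at hS ⊢
  let := hS.invertible
  let := fromBlocks₂₂Invertible A B C D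
  refine ⟨isUnit_of_invertible _, ?_⟩
  rw [← invOf_eq_nonsing_inv, invOf_fromBlocks₂₂_eq]
  simp only [invOf_eq_nonsing_inv]

theorem fromCols_mul_inv_fromBlocks_mul_fromRows {A : Matrix m m α} {B : Matrix m n α}
    {C : Matrix n m α} {D : Matrix n n α} (hD : IsUnit D) (hS : IsUnit (A - B * D⁻¹ * C))
    (H₁ : Matrix k m α) (H₂ : Matrix k n α) (G₁ : Matrix m l α) (G₂ : Matrix n l α) :
    fromCols H₁ H₂ * (fromBlocks A B C D)⁻¹ * fromRows G₁ G₂ =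
      (H₁ - H₂ * D⁻¹ * C) * (A - B * D⁻¹ * C)⁻¹ * (G₁ - B * D⁻¹ * G₂) + H₂ * D⁻¹ * G₂ := by
  rw [(inv_fromBlocks_of_isUnit₂₂ hD hS).2, fromCols_mul_fromBlocks, fromCols_mul_fromRows]
  simp only [Matrix.mul_add, Matrix.add_mul, Matrix.mul_sub, Matrix.sub_mul, Matrix.mul_neg,
    Matrix.neg_mul, Matrix.mul_assoc]
  abel

end Matrix

section
open scoped Matrix.Norms.Operator

variable {E l m n : Type*} [NormedAddCommGroup E] [Fintype l] [Fintype m] [Fintype n]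

theorem Matrix.norm_entry_le_linfty_opNorm {α : Type*} [SeminormedAddCommGroup α]
    (A : Matrix m n α) (i : m) (j : n) : ‖A i j‖ ≤ ‖A‖ := by
  rw [linfty_opNorm_def]
  calc ‖A i j‖ ≤ ∑ j', ‖A i j'‖ :=
        Finset.single_le_sum (fun j' _ => norm_nonneg (A i j')) (Finset.mem_univ j)
    _ = ((∑ j', ‖A i j'‖₊ : NNReal) : ℝ) := by push_cast; rfl
    _ ≤ _ := NNReal.coe_le_coe.mpr
        (Finset.le_sup (f := fun i => ∑ j', ‖A i j'‖₊) (Finset.mem_univ i))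

section NontriviallyNormedField

variable {𝕜 : Type*} [NontriviallyNormedField 𝕜] [NormedSpace 𝕜 E]

theorem Matrix.isBoundedBilinearMap_mul :
    IsBoundedBilinearMap 𝕜 fun p : Matrix l m 𝕜 × Matrix m n 𝕜 => p.1 * p.2 where
  add_left := Matrix.add_mul
  smul_left := Matrix.smul_mul
  add_right := Matrix.mul_add
  smul_right c A B := Matrix.mul_smul A c B
  bound := ⟨1, one_pos, fun A B => by simpa using linfty_opNorm_mul A B⟩

theorem DifferentiableAt.matrix_mul {f : E → Matrix l m 𝕜} {g : E → Matrix m n 𝕜} {x : E}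
    (hf : DifferentiableAt 𝕜 f x) (hg : DifferentiableAt 𝕜 g x) :
    DifferentiableAt 𝕜 (fun y => f y * g y) x :=
  DifferentiableAt.comp (g := fun p : Matrix l m 𝕜 × Matrix m n 𝕜 => p.1 * p.2) x
    (Matrix.isBoundedBilinearMap_mul.differentiableAt _) (hf.prodMk hg)

end NontriviallyNormedField

variable {𝕜 : Type*} [RCLike 𝕜] [NormedSpace 𝕜 E] [DecidableEq n]

theorem DifferentiableAt.matrix_inv {f : E → Matrix n n 𝕜} {x : E}
    (hf : DifferentiableAt 𝕜 f x) (hx : IsUnit (f x)) :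
    DifferentiableAt 𝕜 (fun y => (f y)⁻¹) x := by
  simp only [Matrix.nonsing_inv_eq_ringInverse]
  exact (differentiableAt_inverse hx).comp x hf

theorem Matrix.exists_pos_eventually_isUnit_add_smul_and_norm_le
    {A : Matrix n n 𝕜} (hA : IsUnit A) (B : Matrix n n 𝕜) (H : Matrix l n 𝕜)
    (G : Matrix n m 𝕜) :
    ∃ C > 0, ∀ᶠ t in nhds (0 : 𝕜), IsUnit (A + t • B) ∧
      ∀ i j, ‖(H * (A + t • B)⁻¹ * G - H * A⁻¹ * G) i j‖ ≤ C * ‖t‖ := by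
  have hM : Differentiable 𝕜 fun t : 𝕜 => A + t • B := by fun_prop
  have hM0 : IsUnit (A + (0 : 𝕜) • B) := by simpa using hA
  have hg : DifferentiableAt 𝕜 (fun t : 𝕜 => H * (A + t • B)⁻¹ * G) 0 :=
    ((differentiableAt_const H).matrix_mul ((hM 0).matrix_inv hM0)).matrix_mul
      (differentiableAt_const G)
  obtain ⟨C, hC, hO⟩ := hg.isBigO_sub.exists_pos
  refine ⟨C, hC, ?_⟩
  filter_upwards [(hM 0).continuousAt.eventually_mem (Units.isOpen.mem_nhds hM0), hO.bound]
    with t hunit hbound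
  refine ⟨hunit, fun i j => ?_⟩
  simpa using (norm_entry_le_linfty_opNorm _ i j).trans hbound

end

section BlockSystem

variable {K : Type*} [Field K] {m n p : Type*} [Fintype m] [Fintype n] [DecidableEq m]
  [DecidableEq n] (Fa : Matrix m m K) (Fb : Matrix m n K) (Fc : Matrix n m K) (Fd : Matrix n n K)
  (Ga : Matrix m p K) (Gb : Matrix n p K) (Ha : Matrix p m K) (Hb : Matrix p n K) (s : K)

theorem smul_one_sub_fromBlocks_inv_smul_eq_mul {t : K} (ht : t ≠ 0) :
    s • 1 - fromBlocks Fa Fb (t⁻¹ • Fc) (t⁻¹ • Fd) =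
      fromBlocks (1 : Matrix m m K) 0 0 (t⁻¹ • 1 : Matrix n n K) *
        (fromBlocks (s • 1 - Fa) (-Fb) (-Fc) (-Fd) + t • fromBlocks 0 0 0 (s • 1)) := by
  rw [← fromBlocks_one, fromBlocks_smul, fromBlocks_smul, fromBlocks_add, fromBlocks_multiply,
    sub_eq_add_neg, fromBlocks_neg, fromBlocks_add]
  congr 1 <;> simp [smul_smul, ht, sub_eq_add_neg, add_comm]

theorem isUnit_fromBlocks_one_zero_zero_smul_one {t : K} (ht : t ≠ 0) :
    IsUnit (fromBlocks (1 : Matrix m m K) 0 0 (t • 1 : Matrix n n K)) := by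
  simp [isUnit_iff_isUnit_det, det_fromBlocks_zero₂₁, ht]

theorem transfer_fromBlocks_inv_smul_eq {t : K} (ht : t ≠ 0) :
    fromCols Ha Hb * (s • 1 - fromBlocks Fa Fb (t⁻¹ • Fc) (t⁻¹ • Fd))⁻¹ *
        fromRows Ga (t⁻¹ • Gb) =
      fromCols Ha Hb *
        (fromBlocks (s • 1 - Fa) (-Fb) (-Fc) (-Fd) + t • fromBlocks 0 0 0 (s • 1))⁻¹ *
        fromRows Ga Gb := by
  have hG : fromRows Ga (t⁻¹ • Gb) =
      fromBlocks (1 : Matrix m m K) 0 0 (t⁻¹ • 1 : Matrix n n K) * fromRows Ga Gb := by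
    simp [fromBlocks_mul_fromRows]
  have hP := isUnit_fromBlocks_one_zero_zero_smul_one (m := m) (n := n) (inv_ne_zero ht)
  rw [smul_one_sub_fromBlocks_inv_smul_eq_mul _ _ _ _ _ ht, hG, Matrix.mul_inv_rev]
  simp only [Matrix.mul_assoc,
    nonsing_inv_mul_cancel_left _ (fromRows Ga Gb) ((isUnit_iff_isUnit_det _).mp hP)]

theorem isUnit_smul_one_sub_fromBlocks_inv_smul {t : K} (ht : t ≠ 0)
    (h : IsUnit (fromBlocks (s • 1 - Fa) (-Fb) (-Fc) (-Fd) + t • fromBlocks 0 0 0 (s • 1))) :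
    IsUnit (s • 1 - fromBlocks Fa Fb (t⁻¹ • Fc) (t⁻¹ • Fd)) := by
  rw [smul_one_sub_fromBlocks_inv_smul_eq_mul _ _ _ _ _ ht]
  exact (isUnit_fromBlocks_one_zero_zero_smul_one (inv_ne_zero ht)).mul h

theorem isUnit_fromBlocks_neg_and_transfer_eq (L : Matrix p p K) (hFd : IsUnit Fd)
    (hS : IsUnit (s • 1 - (Fa - Fb * Fd⁻¹ * Fc))) :
    IsUnit (fromBlocks (s • 1 - Fa) (-Fb) (-Fc) (-Fd)) ∧
      fromCols Ha Hb * (fromBlocks (s • 1 - Fa) (-Fb) (-Fc) (-Fd))⁻¹ * fromRows Ga Gb + L =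
        (Ha - Hb * Fd⁻¹ * Fc) * (s • 1 - (Fa - Fb * Fd⁻¹ * Fc))⁻¹ * (Ga - Fb * Fd⁻¹ * Gb) +
          (L - Hb * Fd⁻¹ * Gb) := by
  have hinv : (-Fd)⁻¹ = -Fd⁻¹ :=
    inv_eq_right_inv (by rw [neg_mul_neg, mul_nonsing_inv _ ((isUnit_iff_isUnit_det _).mp hFd)])
  have hschur : s • 1 - Fa - -Fb * (-Fd)⁻¹ * -Fc = s • 1 - (Fa - Fb * Fd⁻¹ * Fc) := by
    rw [hinv]
    simp only [Matrix.neg_mul, Matrix.mul_neg, neg_neg]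
    abel
  rw [← hschur] at hS
  refine ⟨(inv_fromBlocks_of_isUnit₂₂ hFd.neg hS).1, ?_⟩
  rw [fromCols_mul_inv_fromBlocks_mul_fromRows hFd.neg hS, hschur, hinv]
  simp only [Matrix.neg_mul, Matrix.mul_neg, neg_neg]
  abel

end BlockSystem

theorem stmt16 (n₁ n₂ m : ℕ)
    (Fa : Matrix (Fin n₁) (Fin n₁) ℂ) (Fb : Matrix (Fin n₁) (Fin n₂) ℂ)
    (Fc : Matrix (Fin n₂) (Fin n₁) ℂ) (Fd : Matrix (Fin n₂) (Fin n₂) ℂ)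
    (Ga : Matrix (Fin n₁) (Fin m) ℂ) (Gb : Matrix (Fin n₂) (Fin m) ℂ)
    (Ha : Matrix (Fin m) (Fin n₁) ℂ) (Hb : Matrix (Fin m) (Fin n₂) ℂ)
    (K : Matrix (Fin m) (Fin m) ℂ)
    (hFd : IsUnit Fd)
    (F₀ : Matrix (Fin n₁) (Fin n₁) ℂ) (hF₀ : F₀ = Fa - Fb * Fd⁻¹ * Fc)
    (G₀ : Matrix (Fin n₁) (Fin m) ℂ) (hG₀ : G₀ = Ga - Fb * Fd⁻¹ * Gb)
    (H₀ : Matrix (Fin m) (Fin n₁) ℂ) (hH₀ : H₀ = Ha - Hb * Fd⁻¹ * Fc)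
    (K₀ : Matrix (Fin m) (Fin m) ℂ) (hK₀ : K₀ = K - Hb * Fd⁻¹ * Gb)
    (Fε : ℝ → Matrix (Fin n₁ ⊕ Fin n₂) (Fin n₁ ⊕ Fin n₂) ℂ)
    (hFε : ∀ ε : ℝ, Fε ε = Matrix.fromBlocks Fa Fb ((ε⁻¹ : ℂ) • Fc) ((ε⁻¹ : ℂ) • Fd))
    (Φ : ℝ → ℂ → Matrix (Fin m) (Fin m) ℂ)
    (hΦ : ∀ ε : ℝ, ∀ s : ℂ, Φ ε s =
      Matrix.fromCols Ha Hb *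
        (s • (1 : Matrix (Fin n₁ ⊕ Fin n₂) (Fin n₁ ⊕ Fin n₂) ℂ) - Fε ε)⁻¹ *
        Matrix.fromRows Ga ((ε⁻¹ : ℂ) • Gb) + K)
    (Φ₀ : ℂ → Matrix (Fin m) (Fin m) ℂ)
    (hΦ₀ : ∀ s : ℂ, Φ₀ s =
      H₀ * (s • (1 : Matrix (Fin n₁) (Fin n₁) ℂ) - F₀)⁻¹ * G₀ + K₀)
    (s : ℂ) (hs : IsUnit (s • (1 : Matrix (Fin n₁) (Fin n₁) ℂ) - F₀)) :
    ∃ C ε₀ : ℝ, 0 < C ∧ 0 < ε₀ ∧ ∀ ε : ℝ, 0 < ε → ε < ε₀ →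
      IsUnit (s • (1 : Matrix (Fin n₁ ⊕ Fin n₂) (Fin n₁ ⊕ Fin n₂) ℂ) - Fε ε) ∧
      ∀ i j, ‖(Φ ε s - Φ₀ s) i j‖ ≤ C * ε := by
  subst hF₀ hG₀ hH₀ hK₀
  obtain ⟨hA, hΦ₀A⟩ := isUnit_fromBlocks_neg_and_transfer_eq Fa Fb Fc Fd Ga Gb Ha Hb s K hFd hs
  obtain ⟨C, hC, hev⟩ := exists_pos_eventually_isUnit_add_smul_and_norm_le hA
    (fromBlocks 0 0 0 (s • 1)) (fromCols Ha Hb) (fromRows Ga Gb)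
  obtain ⟨δ, hδ, hball⟩ := Metric.eventually_nhds_iff.mp hev
  refine ⟨C, δ, hC, hδ, fun ε hε hεδ => ?_⟩
  have hε0 : (ε : ℂ) ≠ 0 := by exact_mod_cast hε.ne'
  obtain ⟨hunit, hbound⟩ := hball (y := (ε : ℂ)) (by simpa [abs_of_pos hε] using hεδ)
  refine ⟨hFε ε ▸ isUnit_smul_one_sub_fromBlocks_inv_smul Fa Fb Fc Fd s hε0 hunit, fun i j => ?_⟩
  rw [hΦ, hΦ₀, ← hΦ₀A, hFε, transfer_fromBlocks_inv_smul_eq _ _ _ _ _ _ _ _ _ hε0,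
    add_sub_add_right_eq_sub]
  simpa [abs_of_pos hε] using hbound i j
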